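/- Let n ≥ 4 and let Σ = {x ∈ ℝ^{n+1} : x_{n+1} = x_1 x_n + Σ_{i=2}^{n−1} x_i² + x_1³}. Then Σ is affinely homogeneous: for any two points a, b ∈ Σ there exists an affine bijection of ℝ^{n+1} that maps Σ onto Σ and maps a to b. -/

import Mathlib

/-- The hypersurface `Σ = {x ∈ ℝ^{n+1} : x_{n+1} = x₁ x_n + Σ_{i=2}^{n−1} x_i² + x₁³}`
(coordinates are 0-indexed: `x₁ = x 0`, `x_i = x (i-1)`, `x_n = x (n-1)`, `x_{n+1} = x n`). -/
def sigmaCubic (n : ℕ) (hn : 4 ≤ n) : Set (Fin (n + 1) → ℝ) :=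
  {x | x (Fin.last n) = x 0 * x ⟨n - 1, by omega⟩ +
    (∑ i : Fin (n + 1), if 1 ≤ (i : ℕ) ∧ (i : ℕ) ≤ n - 2 then x i ^ 2 else 0) +
    x 0 ^ 3}

/-!
`Σ` is the graph of `F x = x₁ xₙ + Q x + x₁³`, where `Q` is the sum of squares of the middle
coordinates. For `t ∈ Σ` let `L_t` be the unipotent linear map (a product of two
transvections) replacing `xₙ` by `xₙ - 3 t₁ x₁` and `x_{n+1}` by
`x_{n+1} + tₙ x₁ + t₁ xₙ + 2 ∑ tᵢ xᵢ`. Expanding shows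
`F (t + L_t x) = F t + F x + tₙ x₁ + t₁ xₙ + 2 ∑ tᵢ xᵢ` (the shift of `xₙ` absorbs the cross
terms of `(x₁ + t₁)³`), so `x ↦ t + L_t x` is an affine automorphism of `Σ` carrying `0` to `t`.
Composing one such map with the inverse of another moves any point of `Σ` to any other.
-/

open Finset

lemma Finset.sum_add_sq {ι R : Type*} [CommSemiring R] (s : Finset ι) (x t : ι → R) :
    ∑ i ∈ s, (x i + t i) ^ 2 =
      ∑ i ∈ s, x i ^ 2 + 2 * ∑ i ∈ s, t i * x i + ∑ i ∈ s, t i ^ 2 := by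
  simp only [add_sq, sum_add_distrib, mul_sum]
  congr 2
  exact sum_congr rfl fun i _ => by ring

namespace SigmaCubic

variable {n : ℕ}

def midIndices (n : ℕ) : Finset (Fin (n + 1)) :=
  univ.filter fun i => 1 ≤ (i : ℕ) ∧ (i : ℕ) ≤ n - 2

lemma ne_penult_of_mem_midIndices {i : Fin (n + 1)} (hi : i ∈ midIndices n) :
    i ≠ ⟨n - 1, by omega⟩ := by
  simp only [midIndices, mem_filter] at hi
  simp [Fin.ext_iff]
  omega

lemma ne_last_of_mem_midIndices (hn : 0 < n) {i : Fin (n + 1)} (hi : i ∈ midIndices n) :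
    i ≠ Fin.last n := by
  simp only [midIndices, mem_filter] at hi
  simp [Fin.ext_iff]
  omega

lemma mem_sigmaCubic_iff (hn : 4 ≤ n) (x : Fin (n + 1) → ℝ) :
    x ∈ sigmaCubic n hn ↔ x (Fin.last n) =
      x 0 * x ⟨n - 1, by omega⟩ + ∑ i ∈ midIndices n, x i ^ 2 + x 0 ^ 3 := by
  rw [midIndices, sum_filter]
  rfl

def penultShearForm (t : Fin (n + 1) → ℝ) : Module.Dual ℝ (Fin (n + 1) → ℝ) :=
  (-3 * t 0) • LinearMap.proj 0

def lastShearForm (t : Fin (n + 1) → ℝ) : Module.Dual ℝ (Fin (n + 1) → ℝ) :=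
  t ⟨n - 1, by omega⟩ • LinearMap.proj 0 + t 0 • LinearMap.proj ⟨n - 1, by omega⟩ +
    (2 : ℝ) • ∑ i ∈ midIndices n, t i • LinearMap.proj i

lemma penultShearForm_apply (t x : Fin (n + 1) → ℝ) :
    penultShearForm t x = -3 * t 0 * x 0 := by
  simp [penultShearForm, mul_assoc]

lemma lastShearForm_apply (t x : Fin (n + 1) → ℝ) :
    lastShearForm t x = t ⟨n - 1, by omega⟩ * x 0 + t 0 * x ⟨n - 1, by omega⟩ +
      2 * ∑ i ∈ midIndices n, t i * x i := by
  simp [lastShearForm, mul_sum]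

lemma penultShearForm_single (hn : 2 ≤ n) (t : Fin (n + 1) → ℝ) :
    penultShearForm t (Pi.single ⟨n - 1, by omega⟩ 1) = 0 := by
  rw [penultShearForm_apply, Pi.single_apply, if_neg (by simp [Fin.ext_iff]; omega)]
  ring

lemma lastShearForm_single (hn : 0 < n) (t : Fin (n + 1) → ℝ) :
    lastShearForm t (Pi.single (Fin.last n) 1) = 0 := by
  rw [lastShearForm_apply, Pi.single_eq_of_ne (by simp [Fin.ext_iff]; omega),
    Pi.single_eq_of_ne (by simp [Fin.ext_iff]; omega),
    sum_eq_zero fun i hi => by rw [Pi.single_eq_of_ne (ne_last_of_mem_midIndices hn hi), mul_zero]]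
  ring

noncomputable def shear (hn : 2 ≤ n) (t : Fin (n + 1) → ℝ) :
    (Fin (n + 1) → ℝ) ≃ₗ[ℝ] (Fin (n + 1) → ℝ) :=
  (LinearEquiv.transvection (lastShearForm_single (by omega) t)).trans
    (LinearEquiv.transvection (penultShearForm_single hn t))

noncomputable def fromOrigin (hn : 2 ≤ n) (t : Fin (n + 1) → ℝ) :
    (Fin (n + 1) → ℝ) ≃ᵃ[ℝ] (Fin (n + 1) → ℝ) :=
  (shear hn t).toAffineEquiv.trans (AffineEquiv.constVAdd ℝ _ t)

lemma fromOrigin_apply (hn : 2 ≤ n) (t x : Fin (n + 1) → ℝ) :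
    fromOrigin hn t x = t + (x + lastShearForm t x • Pi.single (Fin.last n) 1 +
      penultShearForm t x • Pi.single ⟨n - 1, by omega⟩ 1) := by
  have hlast : Pi.single (M := fun _ => ℝ) (Fin.last n) 1 0 = 0 :=
    Pi.single_eq_of_ne (by simp [Fin.ext_iff]; omega) _
  simp only [fromOrigin, shear, AffineEquiv.trans_apply, LinearEquiv.coe_toAffineEquiv,
    LinearEquiv.trans_apply, LinearEquiv.transvection.apply, AffineEquiv.constVAdd_apply,
    vadd_eq_add, penultShearForm_apply, Pi.add_apply, Pi.smul_apply, hlast, smul_zero, add_zero]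

lemma fromOrigin_zero (hn : 2 ≤ n) (t : Fin (n + 1) → ℝ) : fromOrigin hn t 0 = t := by
  simp [fromOrigin_apply]

lemma fromOrigin_apply_of_ne (hn : 2 ≤ n) (t x : Fin (n + 1) → ℝ) {k : Fin (n + 1)}
    (hkN : k ≠ ⟨n - 1, by omega⟩) (hklast : k ≠ Fin.last n) :
    fromOrigin hn t x k = x k + t k := by
  simp [fromOrigin_apply, hkN, hklast, add_comm]

lemma fromOrigin_apply_penult (hn : 2 ≤ n) (t x : Fin (n + 1) → ℝ) :
    fromOrigin hn t x ⟨n - 1, by omega⟩ =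
      x ⟨n - 1, by omega⟩ - 3 * t 0 * x 0 + t ⟨n - 1, by omega⟩ := by
  have hne : (⟨n - 1, by omega⟩ : Fin (n + 1)) ≠ Fin.last n := by simp [Fin.ext_iff]; omega
  simp [fromOrigin_apply, penultShearForm_apply, hne]
  ring

lemma fromOrigin_apply_last (hn : 2 ≤ n) (t x : Fin (n + 1) → ℝ) :
    fromOrigin hn t x (Fin.last n) = x (Fin.last n) + lastShearForm t x + t (Fin.last n) := by
  have hne : Fin.last n ≠ (⟨n - 1, by omega⟩ : Fin (n + 1)) := by simp [Fin.ext_iff]; omega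
  simp [fromOrigin_apply, hne]
  ring

lemma fromOrigin_mem_sigmaCubic_iff (hn : 4 ≤ n) {t : Fin (n + 1) → ℝ}
    (ht : t ∈ sigmaCubic n hn) (x : Fin (n + 1) → ℝ) :
    fromOrigin (by omega) t x ∈ sigmaCubic n hn ↔ x ∈ sigmaCubic n hn := by
  have h0 : fromOrigin (by omega) t x 0 = x 0 + t 0 :=
    fromOrigin_apply_of_ne _ t x (by simp [Fin.ext_iff]; omega) (by simp [Fin.ext_iff]; omega)
  have hmid : ∀ i ∈ midIndices n, fromOrigin (by omega) t x i ^ 2 = (x i + t i) ^ 2 := by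
    intro i hi
    rw [fromOrigin_apply_of_ne _ t x (ne_penult_of_mem_midIndices hi)
      (ne_last_of_mem_midIndices (by omega) hi)]
  rw [mem_sigmaCubic_iff] at ht
  rw [mem_sigmaCubic_iff, mem_sigmaCubic_iff, h0, fromOrigin_apply_penult, fromOrigin_apply_last,
    sum_congr rfl hmid, sum_add_sq, lastShearForm_apply]
  constructor
  · intro h
    linear_combination h - ht
  · intro h
    linear_combination h + ht

lemma preimage_fromOrigin (hn : 4 ≤ n) {t : Fin (n + 1) → ℝ} (ht : t ∈ sigmaCubic n hn) :
    fromOrigin (by omega) t ⁻¹' sigmaCubic n hn = sigmaCubic n hn :=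
  Set.ext (fromOrigin_mem_sigmaCubic_iff hn ht)

lemma image_fromOrigin (hn : 4 ≤ n) {t : Fin (n + 1) → ℝ} (ht : t ∈ sigmaCubic n hn) :
    fromOrigin (by omega) t '' sigmaCubic n hn = sigmaCubic n hn := by
  conv_lhs => rw [← preimage_fromOrigin hn ht]
  exact Set.image_preimage_eq _ (fromOrigin _ t).surjective

end SigmaCubic

open SigmaCubic in
/-- Hypersurface (2) of Theorem 2: `Σ` is affinely homogeneous — any point can be mapped
to any other point by an affine bijection of `ℝ^{n+1}` preserving `Σ`. -/
theorem sigmaCubic_affinely_homogeneous (n : ℕ) (hn : 4 ≤ n) :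
    ∀ a ∈ sigmaCubic n hn, ∀ b ∈ sigmaCubic n hn,
      ∃ φ : (Fin (n + 1) → ℝ) ≃ᵃ[ℝ] (Fin (n + 1) → ℝ),
        φ '' sigmaCubic n hn = sigmaCubic n hn ∧ φ a = b := by
  intro a ha b hb
  have h2 : 2 ≤ n := by omega
  refine ⟨(fromOrigin h2 a).symm.trans (fromOrigin h2 b), ?_, ?_⟩
  · rw [AffineEquiv.coe_trans, Set.image_comp, AffineEquiv.image_symm,
      preimage_fromOrigin hn ha, image_fromOrigin hn hb]
  · have ha0 : (fromOrigin h2 a).symm a = 0 := by rw [AffineEquiv.symm_apply_eq, fromOrigin_zero]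
    rw [AffineEquiv.trans_apply, ha0, fromOrigin_zero]
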